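/- arXiv:2003.05278 — 2 statements merged into one kernel-verified Lean document; each statement's English description precedes it below -/
import Mathlib

section
/- For positive integers m > n with gcd(m,n) = 1 and m ≢ n (mod 3), the triple (m² + mn + n², n² + 2mn, m² − n²) satisfies gcd of all three entries equal to 1. -/
/-!
A common divisor `d` of `A = m² + mn + n²` is coprime to `m` and to `n`, since `m` and `n` are
coprime and `A ≡ n² (mod m)`, `A ≡ m² (mod n)`. From `A - B = m (m - n)` and `A - C = n (m + 2n)`
we get `d ∣ m - n` and `d ∣ m + 2n`, hence `d ∣ 3n` and so `d ∣ 3`. As `3 ∤ m - n`, `d` is a unit.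
-/

variable {R : Type*} [CommRing R]

theorem IsCoprime.sq_add_mul_add_sq {x y : R} (h : IsCoprime x y) :
    IsCoprime x (x ^ 2 + x * y + y ^ 2) := by
  have := (h.pow_right (n := 2)).add_mul_left_right (x + y)
  convert this using 1
  ring

theorem IsCoprime.isUnit_of_dvd_sq_add_mul_add_sq {m n d : R} (hmn : IsCoprime m n)
    (h3 : IsCoprime (3 : R) (n - m)) (hA : d ∣ m ^ 2 + m * n + n ^ 2)
    (hB : d ∣ n ^ 2 + 2 * m * n) (hC : d ∣ m ^ 2 - n ^ 2) : IsUnit d := by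
  have hdm : IsCoprime d m := (hmn.sq_add_mul_add_sq.of_isCoprime_of_dvd_right hA).symm
  have hdn : IsCoprime d n := by
    have := hmn.symm.sq_add_mul_add_sq.of_isCoprime_of_dvd_right (by convert hA using 1; ring)
    exact this.symm
  have h1 : d ∣ n - m := by
    refine hdm.dvd_of_dvd_mul_left ?_
    convert dvd_sub hB hA using 1
    ring
  have h2 : d ∣ m + 2 * n := by
    refine hdn.dvd_of_dvd_mul_left ?_
    convert dvd_sub hA hC using 1
    ring
  have h3n : d ∣ 3 * n := by
    convert dvd_add h2 h1 using 1
    ring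
  exact h3.isUnit_of_dvd' (hdn.dvd_of_dvd_mul_right h3n) h1

theorem stmt6_general (m n : ℤ) (hcop : Int.gcd m n = 1)
    (hmod : ¬ m ≡ n [ZMOD 3]) :
    Int.gcd (m ^ 2 + m * n + n ^ 2) (Int.gcd (n ^ 2 + 2 * m * n) (m ^ 2 - n ^ 2)) = 1 := by
  have h3 : IsCoprime (3 : ℤ) (n - m) :=
    (Prime.coprime_iff_not_dvd Int.prime_three).mpr (mt Int.modEq_iff_dvd.mpr hmod)
  have hunit := (Int.isCoprime_iff_gcd_eq_one.mpr hcop).isUnit_of_dvd_sq_add_mul_add_sq h3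
    (Int.gcd_dvd_left _ _)
    ((Int.gcd_dvd_right _ _).trans (Int.gcd_dvd_left _ _))
    ((Int.gcd_dvd_right _ _).trans (Int.gcd_dvd_right _ _))
  simpa using Int.isUnit_iff_natAbs_eq.mp hunit

theorem stmt6 (m n : ℤ) (hn : 0 < n) (hmn : m > n) (hcop : Int.gcd m n = 1)
    (hmod : ¬ m ≡ n [ZMOD 3]) :
    Int.gcd (m ^ 2 + m * n + n ^ 2) (Int.gcd (n ^ 2 + 2 * m * n) (m ^ 2 - n ^ 2)) = 1 :=
  stmt6_general m n hcop hmod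
end

section
/- Every primitive sub-Eisensteinian triple (a, b, c), up to swapping b and c, is of the form (m² + mn + n², n² + 2mn, m² − n²) for some positive coprime integers m > n with m ≢ n (mod 3), and this representation is unique. -/
/-!
Put `u = 2a - 2b - c` and `v = 2a + 2b + c`. Since `(2a)² = (2b + c)² + 3c²`, the equation reads
`u v = 3c²`. After swapping `b` and `c` we may take `c` odd; then `u` and `v` are coprime, so
`{u, v} = {s², 3t²}` with `c = s t`. The two cases give the two shapes of the triple, through
`u = (m - n)², v = 3(m + n)²` and `u = 3n², v = (2m + n)²` respectively. The same identities
recover `(m, n)` from `(a, b, c)`, and `m ≢ n (mod 3)` keeps the two shapes apart, whence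
uniqueness.
-/

namespace Int

theorem exists_pos_sq_of_isCoprime_of_mul_eq_sq {u w c : ℤ} (hcop : IsCoprime u w)
    (hu : 0 < u) (hw : 0 < w) (hc : 0 < c) (h : u * w = c ^ 2) :
    ∃ s t, 0 < s ∧ 0 < t ∧ c = s * t ∧ u = s ^ 2 ∧ w = t ^ 2 := by
  have pos_sq : ∀ x y : ℤ, 0 < x → (x = y ^ 2 ∨ x = -y ^ 2) → 0 < |y| ∧ x = |y| ^ 2 := by
    rintro x y hx (rfl | rfl)
    · exact ⟨abs_pos.mpr (by rintro rfl; simp at hx), (sq_abs y).symm⟩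
    · nlinarith [sq_nonneg y]
  obtain ⟨s, hs⟩ := sq_of_isCoprime hcop h
  obtain ⟨t, ht⟩ := sq_of_isCoprime hcop.symm (by rw [mul_comm, h])
  obtain ⟨hs0, rfl⟩ := pos_sq u s hu hs
  obtain ⟨ht0, rfl⟩ := pos_sq w t hw ht
  refine ⟨|s|, |t|, hs0, ht0, ?_, rfl, rfl⟩
  exact (pow_left_inj₀ hc.le (by positivity) two_ne_zero).mp (by rw [← h]; ring)

theorem exists_pos_sq_of_isCoprime_of_mul_eq_three_mul_sq {u v c : ℤ} (hcop : IsCoprime u v)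
    (hu : 0 < u) (hv : 0 < v) (hc : 0 < c) (h : u * v = 3 * c ^ 2) :
    ∃ s t, 0 < s ∧ 0 < t ∧ c = s * t ∧
      (u = s ^ 2 ∧ v = 3 * t ^ 2 ∨ u = 3 * s ^ 2 ∧ v = t ^ 2) := by
  rcases Int.prime_three.dvd_or_dvd ⟨c ^ 2, h⟩ with ⟨w, rfl⟩ | ⟨w, rfl⟩
  · obtain ⟨s, t, hs, ht, hst, rfl, rfl⟩ := exists_pos_sq_of_isCoprime_of_mul_eq_sq
      (hcop.of_mul_left_right) (by linarith) hv hc (by linarith)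
    exact ⟨s, t, hs, ht, hst, Or.inr ⟨rfl, rfl⟩⟩
  · obtain ⟨s, t, hs, ht, hst, rfl, rfl⟩ := exists_pos_sq_of_isCoprime_of_mul_eq_sq
      (hcop.of_mul_right_right) hu (by linarith) hc (by linarith)
    exact ⟨s, t, hs, ht, hst, Or.inl ⟨rfl, rfl⟩⟩

end Int

namespace SubEisenstein

def IsParam (a b c m n : ℤ) : Prop :=
  0 < n ∧ n < m ∧ Int.gcd m n = 1 ∧ ¬ m ≡ n [ZMOD 3] ∧
    a = m ^ 2 + m * n + n ^ 2 ∧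
    ((b = n ^ 2 + 2 * m * n ∧ c = m ^ 2 - n ^ 2) ∨ (b = m ^ 2 - n ^ 2 ∧ c = n ^ 2 + 2 * m * n))

variable {a b c m n : ℤ}

theorem IsParam.swap (h : IsParam a b c m n) : IsParam a c b m n :=
  let ⟨hn, hmn, hcop, hmod, ha, hbc⟩ := h
  ⟨hn, hmn, hcop, hmod, ha, hbc.symm.imp And.symm And.symm⟩

theorem false_of_prime_dvd (hgcd : Int.gcd a (Int.gcd b c) = 1) {p : ℤ} (hp : Prime p)
    (ha : p ∣ a) (hb : p ∣ b) (hc : p ∣ c) : False := by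
  have hp1 : p ∣ 1 := by
    simpa [hgcd] using Int.dvd_coe_gcd ha (Int.dvd_coe_gcd hb hc)
  exact hp.not_isUnit (isUnit_of_dvd_one hp1)

theorem odd_or_odd (h : a ^ 2 = b ^ 2 + c ^ 2 + b * c) (hgcd : Int.gcd a (Int.gcd b c) = 1) :
    Odd b ∨ Odd c := by
  by_contra! hev
  obtain ⟨⟨k, rfl⟩, ⟨l, rfl⟩⟩ := hev.imp Int.not_odd_iff_even.mp Int.not_odd_iff_even.mp
  have ha : 2 ∣ a := Int.prime_two.dvd_of_dvd_pow (n := 2)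
    ⟨2 * (k ^ 2 + l ^ 2 + k * l), by linear_combination h⟩
  exact false_of_prime_dvd hgcd Int.prime_two ha ⟨k, by ring⟩ ⟨l, by ring⟩

theorem sub_pos_and_three_mul_lt (ha : 0 < a) (hb : 0 < b) (hc : 0 < c)
    (h : a ^ 2 = b ^ 2 + c ^ 2 + b * c) :
    0 < 2 * a - 2 * b - c ∧ 3 * (2 * a - 2 * b - c) < 2 * a + 2 * b + c := by
  have h₁ : 2 * b + c < 2 * a := lt_of_pow_lt_pow_left₀ 2 (by positivity) (by nlinarith)
  have h₂ : a < 2 * b + c := lt_of_pow_lt_pow_left₀ 2 (by positivity) (by nlinarith)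
  constructor <;> linarith

theorem isCoprime_sub_add (h : a ^ 2 = b ^ 2 + c ^ 2 + b * c)
    (hgcd : Int.gcd a (Int.gcd b c) = 1) (hodd : Odd c) :
    IsCoprime (2 * a - 2 * b - c) (2 * a + 2 * b + c) := by
  set u := 2 * a - 2 * b - c
  set v := 2 * a + 2 * b + c
  have huv : u * v = 3 * c ^ 2 := by linear_combination 4 * h
  obtain ⟨k, hk⟩ : Odd u := by
    obtain ⟨j, rfl⟩ := hodd
    exact ⟨a - b - j - 1, by ring⟩
  refine isCoprime_of_prime_dvd (fun h0 => by omega) fun p hp hpu hpv => ?_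
  have hp2 : ¬ p ∣ 2 := fun hp2 =>
    hp.not_isUnit (isUnit_of_dvd_one (by simpa [hk] using dvd_sub hpu (hp2.mul_right k)))
  have half : ∀ x, p ∣ 2 * x → p ∣ x := fun x hx => (hp.dvd_or_dvd hx).resolve_left hp2
  have hpc : p ∣ c := by
    rcases hp.dvd_or_dvd (huv ▸ dvd_mul_of_dvd_left hpu v) with hp3 | hpc
    · -- then `3` divides both factors, so `9 ∣ 3c²`
      have h3p : 3 ∣ p := (hp.associated_of_dvd Int.prime_three hp3).symm.dvd
      have h9 : 3 * 3 ∣ 3 * c ^ 2 := huv ▸ mul_dvd_mul (h3p.trans hpu) (h3p.trans hpv)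
      exact hp3.trans (Int.prime_three.dvd_of_dvd_pow
        ((mul_dvd_mul_iff_left (by norm_num)).mp h9))
    · exact hp.dvd_of_dvd_pow hpc
  have hpa : p ∣ a := half _ (half _ (by
    rw [show 2 * (2 * a) = u + v by ring]; exact dvd_add hpu hpv))
  have hpb : p ∣ b := half _ (half _ (by
    rw [show 2 * (2 * b) = v - u - 2 * c by ring]
    exact dvd_sub (dvd_sub hpv hpu) (dvd_mul_of_dvd_right hpc 2)))
  exact false_of_prime_dvd hgcd hp hpa hpb hpc

theorem exists_isParam_of_sq_three_sq {s t : ℤ}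
    (hcop : IsCoprime (2 * a - 2 * b - c) (2 * a + 2 * b + c))
    (hlt : 3 * (2 * a - 2 * b - c) < 2 * a + 2 * b + c) (hodd : Odd c)
    (hs : 0 < s) (ht : 0 < t) (hc : c = s * t)
    (hu : 2 * a - 2 * b - c = s ^ 2) (hv : 2 * a + 2 * b + c = 3 * t ^ 2) :
    ∃ m n, IsParam a b c m n := by
  obtain ⟨hs₂, ht₂⟩ := Int.odd_mul.mp (hc ▸ hodd)
  obtain ⟨n, hn⟩ := ht₂.sub_odd hs₂
  obtain ⟨m, rfl, rfl⟩ : ∃ m, s = m - n ∧ t = m + n := ⟨s + n, by ring, by linarith⟩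
  rw [hu, hv] at hcop hlt
  have hst : IsCoprime (m - n) (m + n) :=
    (IsCoprime.pow_iff two_pos two_pos).mp hcop.of_mul_right_right
  have hlt' : m - n < m + n := lt_of_pow_lt_pow_left₀ 2 ht.le (by linarith)
  obtain ⟨x, y, hxy⟩ := hst
  refine ⟨m, n, by linarith, by linarith, ?_, fun hmod => ?_, by linarith, Or.inl ⟨?_, ?_⟩⟩
  · exact Int.isCoprime_iff_gcd_eq_one.mp ⟨x + y, y - x, by linear_combination hxy⟩
  · have h3 : (3 : ℤ) ∣ (m - n) ^ 2 := dvd_pow hmod.symm.dvd two_ne_zero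
    exact Int.prime_three.not_isUnit (hcop.isUnit_of_dvd' h3 (dvd_mul_right 3 _))
  · linarith
  · rw [hc]; ring

theorem exists_isParam_of_three_sq_sq {n t : ℤ}
    (hcop : IsCoprime (2 * a - 2 * b - c) (2 * a + 2 * b + c))
    (hlt : 3 * (2 * a - 2 * b - c) < 2 * a + 2 * b + c) (hodd : Odd c)
    (hn : 0 < n) (ht : 0 < t) (hc : c = n * t)
    (hu : 2 * a - 2 * b - c = 3 * n ^ 2) (hv : 2 * a + 2 * b + c = t ^ 2) :
    ∃ m n, IsParam a b c m n := by
  obtain ⟨hn₂, ht₂⟩ := Int.odd_mul.mp (hc ▸ hodd)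
  obtain ⟨m, hm⟩ := ht₂.sub_odd hn₂
  obtain rfl : t = 2 * m + n := by linarith
  rw [hu, hv] at hcop hlt
  have hnt : IsCoprime n (2 * m + n) :=
    (IsCoprime.pow_iff two_pos two_pos).mp hcop.of_mul_left_right
  have hlt' : 3 * n < 2 * m + n := lt_of_pow_lt_pow_left₀ 2 ht.le (by linarith)
  obtain ⟨x, y, hxy⟩ := hnt
  refine ⟨m, n, hn, by linarith, ?_, fun hmod => ?_, by linarith, Or.inr ⟨by linarith, ?_⟩⟩
  · exact Int.isCoprime_iff_gcd_eq_one.mp ⟨2 * y, x + y, by linear_combination hxy⟩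
  · obtain ⟨k, hk⟩ := hmod.symm.dvd
    have h3 : (3 : ℤ) ∣ (2 * m + n) ^ 2 := dvd_pow ⟨n + 2 * k, by linarith⟩ two_ne_zero
    exact Int.prime_three.not_isUnit (hcop.isUnit_of_dvd' (dvd_mul_right 3 _) h3)
  · rw [hc]; ring

theorem exists_isParam_of_odd (ha : 0 < a) (hb : 0 < b) (hc : 0 < c)
    (h : a ^ 2 = b ^ 2 + c ^ 2 + b * c) (hgcd : Int.gcd a (Int.gcd b c) = 1) (hodd : Odd c) :
    ∃ m n, IsParam a b c m n := by
  obtain ⟨hu, hlt⟩ := sub_pos_and_three_mul_lt ha hb hc h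
  have hcop := isCoprime_sub_add h hgcd hodd
  obtain ⟨s, t, hs, ht, hst, ⟨hus, hvt⟩ | ⟨hus, hvt⟩⟩ :=
    Int.exists_pos_sq_of_isCoprime_of_mul_eq_three_mul_sq hcop hu (by linarith) hc
      (by linear_combination 4 * h)
  · exact exists_isParam_of_sq_three_sq hcop hlt hodd hs ht hst hus hvt
  · exact exists_isParam_of_three_sq_sq hcop hlt hodd hs ht hst hus hvt

theorem exists_isParam (ha : 0 < a) (hb : 0 < b) (hc : 0 < c)
    (h : a ^ 2 = b ^ 2 + c ^ 2 + b * c) (hgcd : Int.gcd a (Int.gcd b c) = 1) :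
    ∃ m n, IsParam a b c m n := by
  rcases odd_or_odd h hgcd with hodd | hodd
  · obtain ⟨m, n, hmn⟩ := exists_isParam_of_odd ha hc hb (by linear_combination h)
      (by rwa [Int.gcd_comm c b]) hodd
    exact ⟨m, n, hmn.swap⟩
  · exact exists_isParam_of_odd ha hb hc h hgcd hodd

theorem IsParam.sub_eq_and_add_eq (h : IsParam a b c m n) :
    (2 * a - 2 * b - c = (m - n) ^ 2 ∧ 2 * a + 2 * b + c = 3 * (m + n) ^ 2) ∨
      (2 * a - 2 * b - c = 3 * n ^ 2 ∧ 2 * a + 2 * b + c = (2 * m + n) ^ 2) := by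
  obtain ⟨-, -, -, -, rfl, ⟨rfl, rfl⟩ | ⟨rfl, rfl⟩⟩ := h
  · exact Or.inl ⟨by ring, by ring⟩
  · exact Or.inr ⟨by ring, by ring⟩

theorem sq_sub_ne_three_mul_sq (hmod : ¬ m ≡ n [ZMOD 3]) (k : ℤ) : (m - n) ^ 2 ≠ 3 * k ^ 2 :=
  fun h => hmod (Int.modEq_iff_dvd.mpr
    (dvd_sub_comm.mp (Int.prime_three.dvd_of_dvd_pow (n := 2) ⟨k ^ 2, h⟩)))

theorem IsParam.unique {m' n' : ℤ} (h : IsParam a b c m n) (h' : IsParam a b c m' n') :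
    m = m' ∧ n = n' := by
  have sq_inj : ∀ {x y : ℤ}, 0 < x → 0 < y → x ^ 2 = y ^ 2 → x = y := fun hx hy hxy =>
    (pow_left_inj₀ hx.le hy.le two_ne_zero).mp hxy
  rcases h.sub_eq_and_add_eq with ⟨hu, hv⟩ | ⟨hu, hv⟩ <;>
    rcases h'.sub_eq_and_add_eq with ⟨hu', hv'⟩ | ⟨hu', hv'⟩ <;>
    obtain ⟨hn, hmn, -, hmod, -⟩ := h <;> obtain ⟨hn', hmn', -, hmod', -⟩ := h'
  · have hsub := sq_inj (by omega) (by omega) (hu.symm.trans hu')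
    have hadd : m + n = m' + n' := sq_inj (by omega) (by omega) (by linarith)
    omega
  · exact absurd (hu.symm.trans hu') (sq_sub_ne_three_mul_sq hmod n')
  · exact absurd (hu'.symm.trans hu) (sq_sub_ne_three_mul_sq hmod' n)
  · have hn_eq : n = n' := sq_inj hn hn' (by linarith)
    have hadd : 2 * m + n = 2 * m' + n' := sq_inj (by omega) (by omega) (hv.symm.trans hv')
    omega

end SubEisenstein

theorem stmt7 (a b c : ℤ) (ha : 0 < a) (hb : 0 < b) (hc : 0 < c)
    (h : a ^ 2 = b ^ 2 + c ^ 2 + b * c)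
    (hgcd : Int.gcd a (Int.gcd b c) = 1) :
    ∃! mn : ℤ × ℤ, 0 < mn.2 ∧ mn.1 > mn.2 ∧ Int.gcd mn.1 mn.2 = 1 ∧
      ¬ mn.1 ≡ mn.2 [ZMOD 3] ∧
      a = mn.1 ^ 2 + mn.1 * mn.2 + mn.2 ^ 2 ∧
      ((b = mn.2 ^ 2 + 2 * mn.1 * mn.2 ∧ c = mn.1 ^ 2 - mn.2 ^ 2) ∨
       (b = mn.1 ^ 2 - mn.2 ^ 2 ∧ c = mn.2 ^ 2 + 2 * mn.1 * mn.2)) := by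
  obtain ⟨m, n, hmn⟩ := SubEisenstein.exists_isParam ha hb hc h hgcd
  exact ⟨(m, n), hmn, fun _ h' => Prod.ext_iff.mpr (SubEisenstein.IsParam.unique h' hmn)⟩
end
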